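/- Let 𝔪 be a nonempty symmetric multisegment in the bad-parity setting with initial sequence Δ₁ ≥ … ≥ Δ_l, and assume there exist i, j ∈ {1,…,l} with Δ_i∨ = Δ_j; set i₀ = min{i : ∃ j, Δ_i∨ = Δ_j} and j₀ = max{j : ∃ i, Δ_j∨ = Δ_i}. Suppose 𝔪# is nonempty, e(Δ₁) = e(Δ'₁), l' ≥ i₀, and ⁺Δ'_{i₀} = Δ_{i₀}. Then l' ≥ j₀ and, for all i with i₀ ≤ i ≤ j₀, ⁺Δ'_i = Δ_i. -/

import Mathlib

/-!
Write `Δ_{i₀}∨ = Δ_p` and `Δ_{j₀}∨ = Δ_q`. Along an initial sequence the ends drop by exactly one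
and the beginnings by at least one (they decrease and have one parity); comparing
`b(Δ_q) = -e(Δ_{j₀})` with `b(Δ_{i₀}) = -e(Δ_p)` gives `j₀ ≤ p`, hence `Δ_{i₀}∨ = Δ_{j₀}`.
Then every drop between `Δ_{i₀}` and `Δ_{j₀}` is exactly one, so this block consists of translates
of one segment and duality reverses it. For `i₀ ≤ n < j₀` the segment `⁻Δ_{n+1}` thus occurs twice
in `𝔪#`, as `Δ_n⁻` and as `⁻(Δ_{i₀+j₀-n-1}∨)`, so it is an admissible successor of `Δ'_n = ⁻Δ_n`;
by parity nothing lies strictly between, and induction on `n` gives `Δ'_{n+1} = ⁻Δ_{n+1}`.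
-/

namespace AZ

/-- A segment in doubled coordinates: the pair `(a, b)` represents the segment
`[a/2, b/2]` whose endpoints lie in `(1/2)ℤ`.  Thus the end `e(Δ)` is `Δ.2 / 2`,
the beginning `b(Δ)` is `Δ.1 / 2`, and `Δ` is centered iff `Δ.1 + Δ.2 = 0`. -/
abbrev Seg := ℤ × ℤ

namespace Seg

/-- Well-formedness of a segment: `a ≤ b` and `a ≡ b [ZMOD 2]`, i.e. `b - a ∈ 2ℕ`. -/
def WF (Δ : Seg) : Prop := Δ.1 ≤ Δ.2 ∧ Δ.1 % 2 = Δ.2 % 2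

/-- The dual (contragredient) segment `Δ∨ = [−b, −a]`. -/
def dual (Δ : Seg) : Seg := (-Δ.2, -Δ.1)

/-- `Δ⁻` : the segment with its end removed. -/
def trimEnd (Δ : Seg) : Seg := (Δ.1, Δ.2 - 2)

/-- `⁻Δ` : the segment with its beginning removed. -/
def trimBeg (Δ : Seg) : Seg := (Δ.1 + 2, Δ.2)

/-- `⁺Δ` : the segment with its beginning extended. -/
def extBeg (Δ : Seg) : Seg := (Δ.1 - 2, Δ.2)

/-- The order on segments: `[x₁,y₁] ≤ [x₂,y₂]` iff `x₁ < x₂`, or `x₁ = x₂` and `y₁ ≥ y₂`. -/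
def le (Δ₁ Δ₂ : Seg) : Prop := Δ₁.1 < Δ₂.1 ∨ (Δ₁.1 = Δ₂.1 ∧ Δ₂.2 ≤ Δ₁.2)

end Seg

/-- The condition for `next` to be a successor of `Δ j` in the bad-parity initial
sequence: `next ∈ m`, `next ≤ Δ j`, `e(next) = e(Δ j) − 1`, and if the dual of `next`
already occurs among `Δ 1, …, Δ j`, then `next` has multiplicity at least `2` in `m`. -/
def SuccBad (m : Multiset Seg) (Δ : ℕ → Seg) (j : ℕ) (next : Seg) : Prop :=
  next ∈ m ∧ Seg.le next (Δ j) ∧ next.2 = (Δ j).2 - 2 ∧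
    ((∃ i, 1 ≤ i ∧ i ≤ j ∧ Seg.dual next = Δ i) → 2 ≤ m.count next)

/-- `Δ 1, …, Δ l` is the initial sequence in the bad-parity algorithm for `m`. -/
structure IsInitSeqBad (m : Multiset Seg) (Δ : ℕ → Seg) (l : ℕ) : Prop where
  one_le : 1 ≤ l
  first_mem : Δ 1 ∈ m
  first_max_end : ∀ Λ ∈ m, Λ.2 ≤ (Δ 1).2
  first_max : ∀ Λ ∈ m, Λ.2 = (Δ 1).2 → Seg.le Λ (Δ 1)
  succ : ∀ j, 1 ≤ j → j < l → SuccBad m Δ j (Δ (j + 1))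
  succ_max : ∀ j, 1 ≤ j → j < l → ∀ Λ, SuccBad m Δ j Λ → Seg.le Λ (Δ (j + 1))
  last : ∀ Λ, ¬ SuccBad m Δ l Λ

/-- The multisegment `𝔪₁ = [e(Δ_l), e(Δ₁)] + [−e(Δ₁), −e(Δ_l)]`. -/
def mOneBad (Δ : ℕ → Seg) (l : ℕ) : Multiset Seg :=
  {((Δ l).2, (Δ 1).2), (-(Δ 1).2, -(Δ l).2)}

/-- The multiset of segments of an initial sequence. -/
def seqM (Δ : ℕ → Seg) (l : ℕ) : Multiset Seg := (Finset.Icc 1 l).val.map Δ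

/-- The multisegment `𝔪#` : remove one copy of each `Δ i` and each `Δ i∨`, insert
`Δ i⁻` and `⁻(Δ i∨)` and discard empty segments. -/
def mHashBad (m : Multiset Seg) (Δ : ℕ → Seg) (l : ℕ) : Multiset Seg :=
  (m - (seqM Δ l + (seqM Δ l).map Seg.dual)) +
    ((seqM Δ l).map Seg.trimEnd +
        (seqM Δ l).map (fun Δ0 => Seg.dual (Seg.trimEnd Δ0))).filter
      fun Δ0 => Δ0.1 ≤ Δ0.2

/-- The bad-parity duality algorithm `AD`, as a relation: `AD(0) = 0` and
`AD(𝔪) = 𝔪₁ + AD(𝔪#)`. -/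
inductive IsADBad : Multiset Seg → Multiset Seg → Prop
  | zero : IsADBad 0 0
  | step {m : Multiset Seg} {Δ : ℕ → Seg} {l : ℕ} {d : Multiset Seg}
      (hm : m ≠ 0) (hseq : IsInitSeqBad m Δ l) (hrec : IsADBad (mHashBad m Δ l) d) :
      IsADBad m (mOneBad Δ l + d)

/-- A valid symmetric multisegment in the bad-parity setting: every centered segment
has even multiplicity. -/
structure BadInput (m : Multiset Seg) : Prop where
  wf : ∀ Δ0 ∈ m, Seg.WF Δ0
  symm : m.map Seg.dual = m
  parity : ∀ Δ₁ ∈ m, ∀ Δ₂ ∈ m, Δ₁.2 % 2 = Δ₂.2 % 2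
  evenCentered : ∀ Δ0 : Seg, Δ0.1 + Δ0.2 = 0 → Even (m.count Δ0)

/-- Index `i ∈ {1, …, l}` whose segment's dual also occurs in the initial sequence. -/
def HasDualPair (Δ : ℕ → Seg) (l i : ℕ) : Prop :=
  1 ≤ i ∧ i ≤ l ∧ ∃ j, 1 ≤ j ∧ j ≤ l ∧ Seg.dual (Δ i) = Δ j

/-- `i₀ = min{i ∈ {1,…,l} : ∃ j ∈ {1,…,l}, Δ i∨ = Δ j}`. -/
def IsMinDual (Δ : ℕ → Seg) (l i₀ : ℕ) : Prop :=
  HasDualPair Δ l i₀ ∧ ∀ i, HasDualPair Δ l i → i₀ ≤ i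

/-- `j₀ = max{j ∈ {1,…,l} : ∃ i ∈ {1,…,l}, Δ j∨ = Δ i}`. -/
def IsMaxDual (Δ : ℕ → Seg) (l j₀ : ℕ) : Prop :=
  HasDualPair Δ l j₀ ∧ ∀ j, HasDualPair Δ l j → j ≤ j₀

namespace Seg

lemma dual_dual (Λ : Seg) : dual (dual Λ) = Λ := by
  simp [dual]

lemma dual_trimEnd (Λ : Seg) : dual (trimEnd Λ) = trimBeg (dual Λ) := by
  simp only [dual, trimEnd, trimBeg, Prod.mk.injEq, and_true]
  ring

lemma trimBeg_extBeg (Λ : Seg) : trimBeg (extBeg Λ) = Λ := by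
  simp [trimBeg, extBeg]

lemma extBeg_trimBeg (Λ : Seg) : extBeg (trimBeg Λ) = Λ := by
  simp [trimBeg, extBeg]

lemma fst_lt_of_le_of_snd_lt {Λ Λ' : Seg} (h : le Λ Λ') (h' : Λ.2 < Λ'.2) : Λ.1 < Λ'.1 := by
  rcases h with h | ⟨_, h⟩ <;> omega

end Seg

/-- All endpoints lie in one coset of `ℤ` in `(1/2)ℤ`, i.e. in doubled coordinates they have
one parity. -/
def OneCoset (m : Multiset Seg) : Prop :=
  ∃ r : ℤ, ∀ Λ ∈ m, Λ.1 % 2 = r ∧ Λ.2 % 2 = r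

lemma BadInput.oneCoset {m : Multiset Seg} (hm : BadInput m) : OneCoset m := by
  rcases Multiset.empty_or_exists_mem m with rfl | ⟨Λ₀, hΛ₀⟩
  · exact ⟨0, by simp⟩
  · refine ⟨Λ₀.2 % 2, fun Λ hΛ => ?_⟩
    have hpar := hm.parity Λ hΛ Λ₀ hΛ₀
    exact ⟨(hm.wf Λ hΛ).2.trans hpar, hpar⟩

lemma mem_seqM {Δ : ℕ → Seg} {l a : ℕ} (h1 : 1 ≤ a) (h2 : a ≤ l) : Δ a ∈ seqM Δ l :=
  Multiset.mem_map.mpr ⟨a, Finset.mem_val.mpr (Finset.mem_Icc.mpr ⟨h1, h2⟩), rfl⟩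

lemma mem_mHashBad {m : Multiset Seg} {Δ : ℕ → Seg} {l : ℕ} {Λ : Seg}
    (hΛ : Λ ∈ mHashBad m Δ l) :
    Λ ∈ m ∨ Λ.1 ≤ Λ.2 ∧ ∃ Λ₀ ∈ seqM Δ l, Λ = Seg.trimEnd Λ₀ ∨ Λ = Seg.dual (Seg.trimEnd Λ₀) := by
  simp only [mHashBad, Multiset.mem_add, Multiset.mem_filter, Multiset.mem_map] at hΛ
  rcases hΛ with hΛ | ⟨⟨Λ₀, hΛ₀, rfl⟩ | ⟨Λ₀, hΛ₀, rfl⟩, hle⟩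
  · exact Or.inl (Multiset.mem_of_le tsub_le_self hΛ)
  · exact Or.inr ⟨hle, Λ₀, hΛ₀, Or.inl rfl⟩
  · exact Or.inr ⟨hle, Λ₀, hΛ₀, Or.inr rfl⟩

lemma fst_le_snd_of_mem_mHashBad {m : Multiset Seg} {Δ : ℕ → Seg} {l : ℕ}
    (hm : ∀ Λ ∈ m, Λ.1 ≤ Λ.2) {Λ : Seg} (hΛ : Λ ∈ mHashBad m Δ l) : Λ.1 ≤ Λ.2 := by
  rcases mem_mHashBad hΛ with hΛ | ⟨hle, _⟩
  exacts [hm Λ hΛ, hle]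

lemma OneCoset.mHashBad {m : Multiset Seg} {Δ : ℕ → Seg} {l : ℕ} (hm : OneCoset m)
    (hΔ : seqM Δ l ⊆ m) : OneCoset (mHashBad m Δ l) := by
  obtain ⟨r, hr⟩ := hm
  refine ⟨r, fun Λ hΛ => ?_⟩
  rcases mem_mHashBad hΛ with hΛ | ⟨_, Λ₀, hΛ₀, rfl | rfl⟩
  · exact hr Λ hΛ
  all_goals
    obtain ⟨h1, h2⟩ := hr Λ₀ (hΔ hΛ₀)
    simp only [Seg.dual, Seg.trimEnd]
    omega

lemma two_le_count_mHashBad {m : Multiset Seg} {Δ : ℕ → Seg} {l a b : ℕ} {Λ : Seg}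
    (hΛ : Λ.1 ≤ Λ.2) (ha : 1 ≤ a) (hal : a ≤ l) (hb : 1 ≤ b) (hbl : b ≤ l)
    (hta : Seg.trimEnd (Δ a) = Λ) (htb : Seg.dual (Seg.trimEnd (Δ b)) = Λ) :
    2 ≤ (mHashBad m Δ l).count Λ := by
  have hca : 1 ≤ ((seqM Δ l).map Seg.trimEnd).count Λ :=
    Multiset.one_le_count_iff_mem.mpr (Multiset.mem_map.mpr ⟨Δ a, mem_seqM ha hal, hta⟩)
  have hcb : 1 ≤ ((seqM Δ l).map fun Λ₀ => Seg.dual (Seg.trimEnd Λ₀)).count Λ :=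
    Multiset.one_le_count_iff_mem.mpr (Multiset.mem_map.mpr ⟨Δ b, mem_seqM hb hbl, htb⟩)
  rw [mHashBad, Multiset.count_add,
    Multiset.count_filter_of_pos (p := fun Λ₀ : Seg => Λ₀.1 ≤ Λ₀.2) hΛ, Multiset.count_add]
  omega

namespace IsInitSeqBad

variable {m : Multiset Seg} {Δ : ℕ → Seg} {l : ℕ}

lemma mem_and_snd_eq (h : IsInitSeqBad m Δ l) {j : ℕ} (hj : 1 ≤ j) (hjl : j ≤ l) :
    Δ j ∈ m ∧ (Δ j).2 = (Δ 1).2 - 2 * ((j : ℤ) - 1) := by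
  induction j, hj using Nat.le_induction with
  | base => exact ⟨h.first_mem, by ring⟩
  | succ n hn ih =>
    obtain ⟨hmem, -, hsnd, -⟩ := h.succ n hn (by omega)
    refine ⟨hmem, ?_⟩
    rw [hsnd, (ih (by omega)).2]
    push_cast
    ring

lemma mem (h : IsInitSeqBad m Δ l) {j : ℕ} (hj : 1 ≤ j) (hjl : j ≤ l) : Δ j ∈ m :=
  (h.mem_and_snd_eq hj hjl).1

lemma snd_eq (h : IsInitSeqBad m Δ l) {j : ℕ} (hj : 1 ≤ j) (hjl : j ≤ l) :
    (Δ j).2 = (Δ 1).2 - 2 * ((j : ℤ) - 1) :=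
  (h.mem_and_snd_eq hj hjl).2

lemma seqM_subset (h : IsInitSeqBad m Δ l) : seqM Δ l ⊆ m := by
  intro Λ hΛ
  obtain ⟨j, hj, rfl⟩ := Multiset.mem_map.mp hΛ
  obtain ⟨hj1, hjl⟩ := Finset.mem_Icc.mp (Finset.mem_val.mp hj)
  exact h.mem hj1 hjl

lemma fst_le_sub (h : IsInitSeqBad m Δ l) (hm : OneCoset m) {j k : ℕ} (hj : 1 ≤ j)
    (hjk : j ≤ k) (hkl : k ≤ l) : (Δ k).1 ≤ (Δ j).1 - 2 * ((k : ℤ) - j) := by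
  obtain ⟨r, hr⟩ := hm
  induction k, hjk using Nat.le_induction with
  | base => omega
  | succ n hn ih =>
    obtain ⟨hmem, hle, hsnd, -⟩ := h.succ n (by omega) (by omega)
    have hlt := Seg.fst_lt_of_le_of_snd_lt hle (by omega)
    have hpar := (hr _ hmem).1
    have hpar' := (hr _ (h.mem (j := n) (by omega) (by omega))).1
    have := ih (by omega)
    push_cast
    omega

lemma le_of_dual_eq_of_dual_eq (h : IsInitSeqBad m Δ l) (hm : OneCoset m) {i j p q : ℕ}
    (hi : 1 ≤ i) (hiq : i ≤ q) (hql : q ≤ l) (hp : 1 ≤ p) (hpl : p ≤ l) (hj : 1 ≤ j)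
    (hjl : j ≤ l) (hdi : Seg.dual (Δ i) = Δ p) (hdj : Seg.dual (Δ j) = Δ q) : j ≤ p := by
  have hbi : (Δ i).1 = -(Δ p).2 := by rw [← hdi, Seg.dual, neg_neg]
  have hbq : (Δ q).1 = -(Δ j).2 := by rw [← hdj]; rfl
  have := h.fst_le_sub hm hi hiq hql
  have := h.snd_eq hp hpl
  have := h.snd_eq hj hjl
  omega

lemma dual_eq_of_isMinDual_of_isMaxDual (h : IsInitSeqBad m Δ l) (hm : OneCoset m)
    {i₀ j₀ : ℕ} (hi₀ : IsMinDual Δ l i₀) (hj₀ : IsMaxDual Δ l j₀) :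
    Seg.dual (Δ i₀) = Δ j₀ := by
  obtain ⟨⟨hi₀1, hi₀l, p, hp1, hpl, hdp⟩, hmin⟩ := hi₀
  obtain ⟨⟨hj₀1, hj₀l, q, hq1, hql, hdq⟩, hmax⟩ := hj₀
  have hpj₀ : p ≤ j₀ := hmax p ⟨hp1, hpl, i₀, hi₀1, hi₀l, by rw [← hdp, Seg.dual_dual]⟩
  have hi₀q : i₀ ≤ q := hmin q ⟨hq1, hql, j₀, hj₀1, hj₀l, by rw [← hdq, Seg.dual_dual]⟩
  rwa [le_antisymm hpj₀ (h.le_of_dual_eq_of_dual_eq hm hi₀1 hi₀q hql hp1 hpl hj₀1 hj₀l hdp hdq)]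
    at hdp

/-- From `Δ_i` to `Δ_j = Δ_i∨` the beginnings drop as much as the ends, so every step of
`fst_le_sub` is tight. -/
lemma fst_eq_of_dual_eq (h : IsInitSeqBad m Δ l) (hm : OneCoset m) {i j k : ℕ} (hi : 1 ≤ i)
    (hik : i ≤ k) (hkj : k ≤ j) (hjl : j ≤ l) (hd : Seg.dual (Δ i) = Δ j) :
    (Δ k).1 = (Δ i).1 - 2 * ((k : ℤ) - i) := by
  have hbi : (Δ i).1 = -(Δ j).2 := by rw [← hd, Seg.dual, neg_neg]
  have hbj : (Δ j).1 = -(Δ i).2 := by rw [← hd]; rfl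
  have := h.fst_le_sub hm hi hik (hkj.trans hjl)
  have := h.fst_le_sub hm (hi.trans hik) hkj hjl
  have := h.snd_eq hi (hik.trans (hkj.trans hjl))
  have := h.snd_eq (hi.trans (hik.trans hkj)) hjl
  omega

lemma trimEnd_eq_trimBeg_succ (h : IsInitSeqBad m Δ l) (hm : OneCoset m) {i j n : ℕ}
    (hi : 1 ≤ i) (hin : i ≤ n) (hnj : n < j) (hjl : j ≤ l) (hd : Seg.dual (Δ i) = Δ j) :
    Seg.trimEnd (Δ n) = Seg.trimBeg (Δ (n + 1)) := by
  have := h.fst_eq_of_dual_eq hm hi hin hnj.le hjl hd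
  have := h.fst_eq_of_dual_eq hm hi (k := n + 1) (by omega) hnj hjl hd
  have := h.snd_eq (hi.trans hin) (by omega)
  have := h.snd_eq (j := n + 1) (by omega) (by omega)
  simp only [Seg.trimEnd, Seg.trimBeg, Prod.ext_iff]
  push_cast at *
  omega

lemma dual_eq_sub (h : IsInitSeqBad m Δ l) (hm : OneCoset m) {i j k : ℕ} (hi : 1 ≤ i)
    (hik : i ≤ k) (hkj : k ≤ j) (hjl : j ≤ l) (hd : Seg.dual (Δ i) = Δ j) :
    Seg.dual (Δ k) = Δ (i + j - k) := by
  have hbi : (Δ i).1 = -(Δ j).2 := by rw [← hd, Seg.dual, neg_neg]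
  have := h.fst_eq_of_dual_eq hm hi hik hkj hjl hd
  have := h.fst_eq_of_dual_eq hm hi (k := i + j - k) (by omega) (by omega) hjl hd
  have := h.snd_eq (hi.trans hik) (hkj.trans hjl)
  have := h.snd_eq (j := i + j - k) (by omega) (by omega)
  have := h.snd_eq (hi.trans (hik.trans hkj)) hjl
  have := h.snd_eq hi (hik.trans (hkj.trans hjl))
  simp only [Seg.dual, Prod.ext_iff]
  push_cast [Nat.cast_sub (show k ≤ i + j by omega)] at *
  omega

lemma succBad_mHashBad_trimBeg (h : IsInitSeqBad m Δ l) (hm : OneCoset m) {i j n : ℕ}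
    (hi : 1 ≤ i) (hin : i ≤ n) (hnj : n < j) (hjl : j ≤ l) (hd : Seg.dual (Δ i) = Δ j)
    (hlen : (Δ i).1 + 2 ≤ (Δ i).2) {Δ' : ℕ → Seg} (hΔ' : Δ' n = Seg.trimBeg (Δ n)) :
    SuccBad (mHashBad m Δ l) Δ' n (Seg.trimBeg (Δ (n + 1))) := by
  have hsucc := h.trimEnd_eq_trimBeg_succ hm hi hin hnj hjl hd
  have hne : (Seg.trimBeg (Δ (n + 1))).1 ≤ (Seg.trimBeg (Δ (n + 1))).2 := by
    have := h.fst_eq_of_dual_eq hm hi (k := n + 1) (by omega) hnj hjl hd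
    have := h.snd_eq hi (by omega)
    have := h.snd_eq (j := n + 1) (by omega) (by omega)
    simp only [Seg.trimBeg]
    push_cast at *
    omega
  have hdual : Seg.dual (Seg.trimEnd (Δ (i + j - (n + 1)))) = Seg.trimBeg (Δ (n + 1)) := by
    rw [Seg.dual_trimEnd, h.dual_eq_sub hm hi (by omega) (by omega) hjl hd]
    congr 2
    omega
  have hcount : 2 ≤ (mHashBad m Δ l).count (Seg.trimBeg (Δ (n + 1))) :=
    two_le_count_mHashBad hne (by omega) (by omega) (by omega) (by omega) hsucc hdual
  refine ⟨Multiset.count_pos.mp (by omega), Or.inl ?_, ?_, fun _ => hcount⟩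
  · rw [hΔ', ← hsucc]
    simp [Seg.trimEnd, Seg.trimBeg]
  · rw [hΔ', ← hsucc]
    rfl

lemma succ_eq_of_succBad (h : IsInitSeqBad m Δ l) (hm : OneCoset m) {n : ℕ} (hn : 1 ≤ n)
    (hnl : n ≤ l) {Λ : Seg} (hΛ : SuccBad m Δ n Λ) (hfst : Λ.1 + 2 = (Δ n).1) :
    n < l ∧ Δ (n + 1) = Λ := by
  have hlt : n < l := lt_of_le_of_ne hnl fun hl => h.last Λ (hl ▸ hΛ)
  obtain ⟨r, hr⟩ := hm
  obtain ⟨hmem, hle, hsnd, -⟩ := h.succ n hn hlt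
  have hΛle := h.succ_max n hn hlt Λ hΛ
  have := Seg.fst_lt_of_le_of_snd_lt hle (by omega)
  have := (hr _ hmem).1
  have := (hr _ hΛ.1).1
  have := hΛ.2.2.1
  unfold Seg.le at hΛle
  refine ⟨hlt, Prod.ext ?_ ?_⟩ <;> omega

end IsInitSeqBad

theorem stmt8_general (m : Multiset Seg) (hbad : BadInput m)
    (Δ : ℕ → Seg) (l : ℕ) (hseq : IsInitSeqBad m Δ l)
    (i₀ j₀ : ℕ) (hi₀ : IsMinDual Δ l i₀) (hj₀ : IsMaxDual Δ l j₀)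
    (Δ' : ℕ → Seg) (l' : ℕ)
    (hseq' : IsInitSeqBad (mHashBad m Δ l) Δ' l')
    (hl' : i₀ ≤ l') (hext : Seg.extBeg (Δ' i₀) = Δ i₀) :
    j₀ ≤ l' ∧ ∀ i, i₀ ≤ i → i ≤ j₀ → Seg.extBeg (Δ' i) = Δ i := by
  have hi₀1 : 1 ≤ i₀ := hi₀.1.1
  have hj₀l : j₀ ≤ l := hj₀.1.2.1
  have hcoset := hbad.oneCoset
  have hcoset' := hcoset.mHashBad hseq.seqM_subset
  have hdual := hseq.dual_eq_of_isMinDual_of_isMaxDual hcoset hi₀ hj₀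
  have hΔ'i₀ : Δ' i₀ = Seg.trimBeg (Δ i₀) := by rw [← hext, Seg.trimBeg_extBeg]
  have hlen : (Δ i₀).1 + 2 ≤ (Δ i₀).2 := by
    have := fst_le_snd_of_mem_mHashBad (fun Λ hΛ => (hbad.wf Λ hΛ).1) (hseq'.mem hi₀1 hl')
    rwa [hΔ'i₀] at this
  have hblock : ∀ i, i₀ ≤ i → i ≤ j₀ → i ≤ l' ∧ Δ' i = Seg.trimBeg (Δ i) := by
    intro i hi
    induction i, hi using Nat.le_induction with
    | base => exact fun _ => ⟨hl', hΔ'i₀⟩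
    | succ n hn ih =>
      intro hnj
      obtain ⟨hnl', hΔ'n⟩ := ih (by omega)
      have hstep := hseq.trimEnd_eq_trimBeg_succ hcoset hi₀1 hn hnj hj₀l hdual
      exact hseq'.succ_eq_of_succBad hcoset' (hi₀1.trans hn) hnl'
        (hseq.succBad_mHashBad_trimBeg hcoset hi₀1 hn hnj hj₀l hdual hlen hΔ'n)
        (by rw [hΔ'n, ← hstep]; rfl)
  refine ⟨(hblock j₀ (hj₀.2 i₀ hi₀.1) le_rfl).1, fun i hi hij => ?_⟩
  rw [(hblock i hi hij).2, Seg.extBeg_trimBeg]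

/-- Lemma 7.1.3: with `Δ'` the initial sequence of `𝔪#`, assume
`e(Δ₁) = e(Δ'₁)`, `l' ≥ i₀` and `⁺Δ'_{i₀} = Δ_{i₀}`.  Then `l' ≥ j₀` and
`⁺Δ'_i = Δ_i` for all `i₀ ≤ i ≤ j₀`. -/
theorem stmt8 (m : Multiset Seg) (hbad : BadInput m) (hne : m ≠ 0)
    (Δ : ℕ → Seg) (l : ℕ) (hseq : IsInitSeqBad m Δ l)
    (i₀ j₀ : ℕ) (hi₀ : IsMinDual Δ l i₀) (hj₀ : IsMaxDual Δ l j₀)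
    (Δ' : ℕ → Seg) (l' : ℕ) (hne' : mHashBad m Δ l ≠ 0)
    (hseq' : IsInitSeqBad (mHashBad m Δ l) Δ' l')
    (hE : (Δ 1).2 = (Δ' 1).2)
    (hl' : i₀ ≤ l') (hext : Seg.extBeg (Δ' i₀) = Δ i₀) :
    j₀ ≤ l' ∧ ∀ i, i₀ ≤ i → i ≤ j₀ → Seg.extBeg (Δ' i) = Δ i :=
  stmt8_general m hbad Δ l hseq i₀ j₀ hi₀ hj₀ Δ' l' hseq' hl' hext

end AZ
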